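/- arXiv:quant-ph/0412071 — 2 statements merged into one kernel-verified Lean document; each statement's English description precedes it below -/
import Mathlib

section
/- Let G = (V, E) be a finite simple graph with δ(G) = δ_loc(G) = d, and let D ⊆ V with |D| = d. Then for every nonempty subset K ⊆ D there exists a vertex u ∈ V \ D such that |N_G(u) ∩ K| is odd. -/
open SimpleGraph

variable {V : Type*}

/-- Local complementation of `G` at the vertex `v`: adjacency among the
neighbors of `v` is complemented, i.e. the edge set is `E Δ K_v`. -/
def localComp (G : SimpleGraph V) (v : V) : SimpleGraph V where
  Adj u w := u ≠ w ∧ ¬ (G.Adj u w ↔ (G.Adj v u ∧ G.Adj v w))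
  symm := by
    constructor
    intro u w h
    refine ⟨h.1.symm, ?_⟩
    have h1 := G.adj_comm u w
    have h2 := h.2
    tauto
  loopless := by
    constructor
    intro u h
    exact h.1 rfl

/-- The minimal vertex degree `δ(G)` of a graph. -/
noncomputable def minDegree (G : SimpleGraph V) : ℕ :=
  sInf (Set.range fun v => (G.neighborSet v).ncard)

/-- The minimal degree under local complementation `δ_loc(G)`: the minimum of
`δ(G')` over all graphs `G'` obtainable from `G` by a finite sequence of
local complementations. -/
noncomputable def minDegreeLoc (G : SimpleGraph V) : ℕ :=
  sInf {n | ∃ l : List V, minDegree (l.foldl localComp G) = n}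

/-- `D` is an evenly seen set if every vertex outside `D` has an even number
of neighbors in `D`. -/
def EvenlySeen (G : SimpleGraph V) (D : Set V) : Prop :=
  ∀ u ∉ D, Even ((G.neighborSet u ∩ D).ncard)

/-- A nonempty set `K` is `d`-locally evenly seen if there is a set `D` with
`K ⊆ D ⊆ V` and `|D| = d` such that every vertex outside `D` has an even
number of neighbors in `K`. -/
def LocallyEvenlySeen (G : SimpleGraph V) (d : ℕ) (K : Set V) : Prop :=
  K.Nonempty ∧ ∃ D : Set V, K ⊆ D ∧ D.ncard = d ∧
    ∀ u ∉ D, Even ((G.neighborSet u ∩ K).ncard)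

/-!
Suppose every vertex outside `D` sees `K` evenly. If some `v ∈ K` sees `K` oddly, then after
complementing at `v` and removing `v` from `K` this still holds: a vertex `u ∉ K` adjacent to
`v` gains the parity of `|N(v) ∩ K|` and loses the neighbour `v`. If no vertex of `K` sees `K`
oddly but an evenly seeing vertex `u` is adjacent to some `w ∈ K`, complementing at `u` makes
`w` see `K` oddly and changes no parity outside `K`. Otherwise every neighbour of a vertex
`w ∈ K` sees `K` oddly, hence lies in `D \ K`, and `deg w < |D|`. As `K` shrinks, some sequence of
local complementations reaches minimum degree below `|D| = δ_loc(G)`, which is absurd.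
-/

open scoped symmDiff

theorem Set.ncard_symmDiff_add_two_mul_ncard_inter [Finite V] (s t : Set V) :
    (s ∆ t).ncard + 2 * (s ∩ t).ncard = s.ncard + t.ncard := by
  have hsdiff := Set.ncard_sdiff_add_ncard_of_subset
    (Set.inter_subset_left.trans Set.subset_union_left : s ∩ t ⊆ s ∪ t)
  have hunion := Set.ncard_union_add_ncard_inter s t
  rw [show s ∆ t = (s ∪ t) \ (s ∩ t) from symmDiff_eq_sup_sdiff_inf s t]
  omega

theorem Set.cast_ncard_symmDiff_zmod_two [Finite V] (s t : Set V) :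
    ((s ∆ t).ncard : ZMod 2) = s.ncard + t.ncard := by
  have h := congrArg (Nat.cast : ℕ → ZMod 2) (Set.ncard_symmDiff_add_two_mul_ncard_inter s t)
  push_cast at h
  rwa [show (2 : ZMod 2) = 0 from rfl, zero_mul, add_zero] at h

theorem Set.cast_ncard_sdiff_singleton_zmod_two [Finite V] {s : Set V} {a : V} (h : a ∈ s) :
    ((s \ {a}).ncard : ZMod 2) = s.ncard + 1 := by
  rw [← Set.ncard_sdiff_singleton_add_one h]
  push_cast
  rw [add_assoc, CharTwo.add_self_eq_zero, add_zero]

section LocalComplementation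

variable {G : SimpleGraph V} {u v : V}

theorem localComp_adj_right : (localComp G v).Adj u v ↔ G.Adj u v := by
  have := G.loopless.irrefl v
  simp only [localComp]
  constructor
  · rintro ⟨-, h⟩
    tauto
  · intro h
    exact ⟨G.ne_of_adj h, by tauto⟩

theorem neighborSet_localComp_of_not_adj (h : ¬ G.Adj v u) :
    (localComp G v).neighborSet u = G.neighborSet u := by
  ext w
  simp only [mem_neighborSet, localComp, h, false_and, iff_false, not_not]
  exact ⟨And.right, fun huw => ⟨G.ne_of_adj huw, huw⟩⟩

theorem neighborSet_localComp_of_adj (h : G.Adj v u) :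
    (localComp G v).neighborSet u = G.neighborSet u ∆ (G.neighborSet v \ {u}) := by
  ext w
  rcases eq_or_ne w u with rfl | hwu
  · simp [localComp, Set.mem_symmDiff]
  · simp [localComp, Set.mem_symmDiff, h, hwu, hwu.symm]
    tauto

end LocalComplementation

noncomputable def nbrParity (G : SimpleGraph V) (K : Set V) (u : V) : ZMod 2 :=
  (G.neighborSet u ∩ K).ncard

section NbrParity

variable {G : SimpleGraph V} {K : Set V} {u v : V}

theorem nbrParity_eq_zero_iff : nbrParity G K u = 0 ↔ Even (G.neighborSet u ∩ K).ncard :=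
  ZMod.natCast_eq_zero_iff_even

theorem nbrParity_eq_one_iff : nbrParity G K u = 1 ↔ Odd (G.neighborSet u ∩ K).ncard :=
  ZMod.natCast_eq_one_iff_odd

theorem nbrParity_ne_one_iff : nbrParity G K u ≠ 1 ↔ nbrParity G K u = 0 := by
  rw [ne_eq, nbrParity_eq_one_iff, nbrParity_eq_zero_iff, Nat.not_odd_iff_even]

theorem nbrParity_ne_zero_iff : nbrParity G K u ≠ 0 ↔ nbrParity G K u = 1 := by
  rw [ne_eq, nbrParity_eq_zero_iff, nbrParity_eq_one_iff, Nat.not_even_iff_odd]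

theorem nbrParity_sdiff_singleton_of_not_adj (huv : ¬ G.Adj u v) :
    nbrParity G (K \ {v}) u = nbrParity G K u := by
  unfold nbrParity
  rw [← Set.inter_sdiff_assoc, Set.sdiff_singleton_eq_self fun h => huv h.1]

theorem nbrParity_localComp_of_not_adj (h : ¬ G.Adj v u) :
    nbrParity (localComp G v) K u = nbrParity G K u := by
  rw [nbrParity, neighborSet_localComp_of_not_adj h, nbrParity]

variable [Finite V]

theorem nbrParity_sdiff_singleton_of_adj (huv : G.Adj u v) (hv : v ∈ K) :
    nbrParity G (K \ {v}) u = nbrParity G K u + 1 := by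
  unfold nbrParity
  rw [← Set.inter_sdiff_assoc,
    Set.cast_ncard_sdiff_singleton_zmod_two (show v ∈ G.neighborSet u ∩ K from ⟨huv, hv⟩)]

theorem nbrParity_localComp_of_adj (h : G.Adj v u) :
    nbrParity (localComp G v) K u =
      nbrParity G K u + ((G.neighborSet v ∩ K) \ {u}).ncard := by
  unfold nbrParity
  rw [neighborSet_localComp_of_adj h, Set.inter_symmDiff_distrib_right,
    Set.sdiff_inter_right_comm, Set.cast_ncard_symmDiff_zmod_two]

theorem nbrParity_localComp_of_adj_of_notMem (h : G.Adj v u) (hu : u ∉ K) :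
    nbrParity (localComp G v) K u = nbrParity G K u + nbrParity G K v := by
  rw [nbrParity_localComp_of_adj h, Set.sdiff_singleton_eq_self fun h => hu h.2]
  rfl

theorem nbrParity_localComp_of_adj_of_mem (h : G.Adj v u) (hu : u ∈ K) :
    nbrParity (localComp G v) K u = nbrParity G K u + nbrParity G K v + 1 := by
  rw [nbrParity_localComp_of_adj h,
    Set.cast_ncard_sdiff_singleton_zmod_two (show u ∈ G.neighborSet v ∩ K from ⟨h, hu⟩), add_assoc]
  rfl

theorem nbrParity_localComp_sdiff_singleton (hv : v ∈ K) (hodd : nbrParity G K v = 1)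
    (hu : u ∉ K) : nbrParity (localComp G v) (K \ {v}) u = nbrParity G K u := by
  by_cases h : G.Adj v u
  · rw [nbrParity_sdiff_singleton_of_adj (localComp_adj_right.2 h.symm) hv,
      nbrParity_localComp_of_adj_of_notMem h hu, hodd, add_assoc,
      CharTwo.add_self_eq_zero, add_zero]
  · rw [nbrParity_sdiff_singleton_of_not_adj (fun h' => h (localComp_adj_right.1 h').symm),
      nbrParity_localComp_of_not_adj h]

end NbrParity

section Reduction

variable [Finite V] {G : SimpleGraph V} {D K : Set V}

theorem minDegree_lt_ncard_of_forall_adj (hK : K.Nonempty) (hKD : K ⊆ D)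
    (hout : ∀ u ∉ D, nbrParity G K u = 0) (hin : ∀ v ∈ K, nbrParity G K v = 0)
    (hodd : ∀ u, ∀ w ∈ K, G.Adj u w → nbrParity G K u = 1) :
    minDegree G < D.ncard := by
  obtain ⟨w, hw⟩ := hK
  have hsub : G.neighborSet w ⊆ D \ K := fun x hx => by
    have hx1 := hodd x w hw hx.symm
    refine ⟨by_contra fun hxD => ?_, fun hxK => ?_⟩
    · exact zero_ne_one ((hout x hxD).symm.trans hx1)
    · exact zero_ne_one ((hin x hxK).symm.trans hx1)
  calc minDegree G ≤ (G.neighborSet w).ncard := Nat.sInf_le ⟨w, rfl⟩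
    _ ≤ (D \ K).ncard := Set.ncard_le_ncard hsub
    _ < D.ncard := Set.ncard_lt_ncard (Set.sdiff_ssubset_left_iff.2 ⟨w, hKD hw, hw⟩)

theorem exists_foldl_localComp_nbrParity_eq_one (hK : K.Nonempty) (hKD : K ⊆ D)
    (hout : ∀ u ∉ D, nbrParity G K u = 0) (hdeg : D.ncard ≤ minDegree G) :
    ∃ l : List V, (∀ u ∉ D, nbrParity (l.foldl localComp G) K u = 0) ∧
      ∃ v ∈ K, nbrParity (l.foldl localComp G) K v = 1 := by
  by_cases hKodd : ∃ v ∈ K, nbrParity G K v = 1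
  · exact ⟨[], hout, hKodd⟩
  push Not at hKodd
  simp only [nbrParity_ne_one_iff] at hKodd
  by_cases hu : ∃ u, ∃ w ∈ K, G.Adj u w ∧ nbrParity G K u = 0
  · obtain ⟨u, w, hw, huw, hu0⟩ := hu
    refine ⟨[u], fun x hx => ?_, w, hw, ?_⟩
    · have hxK : x ∉ K := fun h => hx (hKD h)
      by_cases hux : G.Adj u x
      · rw [List.foldl_cons, List.foldl_nil, nbrParity_localComp_of_adj_of_notMem hux hxK,
          hout x hx, hu0, add_zero]
      · rw [List.foldl_cons, List.foldl_nil, nbrParity_localComp_of_not_adj hux, hout x hx]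
    · rw [List.foldl_cons, List.foldl_nil, nbrParity_localComp_of_adj_of_mem huw hw, hKodd w hw,
        hu0, zero_add, zero_add]
  push Not at hu
  simp only [nbrParity_ne_zero_iff] at hu
  exact absurd (minDegree_lt_ncard_of_forall_adj hK hKD hout hKodd hu) (not_lt.2 hdeg)

theorem exists_minDegree_foldl_localComp_lt (G : SimpleGraph V) (D K : Set V)
    (hK : K.Nonempty) (hKD : K ⊆ D) (hout : ∀ u ∉ D, nbrParity G K u = 0) :
    ∃ l : List V, minDegree (l.foldl localComp G) < D.ncard := by
  by_cases hdeg : minDegree G < D.ncard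
  · exact ⟨[], hdeg⟩
  obtain ⟨l, hout', v, hv, hodd⟩ :=
    exists_foldl_localComp_nbrParity_eq_one hK hKD hout (not_lt.1 hdeg)
  set G' := l.foldl localComp G
  have hK' : (K \ {v}).Nonempty := by
    obtain ⟨x, hvx, hx⟩ := Set.nonempty_of_ncard_ne_zero
      (fun h => zero_ne_one (by rw [← hodd, nbrParity, h, Nat.cast_zero]))
    exact ⟨x, hx, (G'.ne_of_adj hvx).symm⟩
  have hout'' : ∀ u ∉ D, nbrParity (localComp G' v) (K \ {v}) u = 0 := fun u hu => by
    rw [nbrParity_localComp_sdiff_singleton hv hodd fun h => hu (hKD h), hout' u hu]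
  obtain ⟨l', hl'⟩ := exists_minDegree_foldl_localComp_lt (localComp G' v) D (K \ {v}) hK'
    (Set.sdiff_subset.trans hKD) hout''
  exact ⟨l ++ v :: l', by rwa [List.foldl_append, List.foldl_cons]⟩
termination_by K.ncard
decreasing_by exact Set.ncard_sdiff_singleton_lt_of_mem hv

end Reduction

theorem statement_9_general [Fintype V] (G : SimpleGraph V) (d : ℕ)
    (h2 : minDegreeLoc G = d)
    (D : Set V) (hD : D.ncard = d)
    (K : Set V) (hKD : K ⊆ D) (hK : K.Nonempty) :
    ∃ u ∉ D, Odd ((G.neighborSet u ∩ K).ncard) := by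
  by_contra! hcon
  obtain ⟨l, hl⟩ := exists_minDegree_foldl_localComp_lt G D K hK hKD
    fun u hu => nbrParity_eq_zero_iff.2 (Nat.not_odd_iff_even.1 (hcon u hu))
  have hloc : minDegreeLoc G ≤ minDegree (l.foldl localComp G) := Nat.sInf_le ⟨l, rfl⟩
  omega

/-- If `δ(G) = δ_loc(G) = d` and `|D| = d`, then every nonempty
subset `K ⊆ D` is seen oddly by some vertex outside `D`. -/
theorem statement_9 [Fintype V] (G : SimpleGraph V) (d : ℕ)
    (h1 : minDegree G = d) (h2 : minDegreeLoc G = d)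
    (D : Set V) (hD : D.ncard = d)
    (K : Set V) (hKD : K ⊆ D) (hK : K.Nonempty) :
    ∃ u ∉ D, Odd ((G.neighborSet u ∩ K).ncard) :=
  statement_9_general G d h2 D hD K hKD hK
end

section
/- For every finite simple graph G = (V, E) with nonempty vertex set, δ_loc(G) ≤ min(⌊|V|/2⌋, rank(A)), where A is the adjacency matrix of G with entries in the two-element field F₂ and rank(A) is its rank over F₂. -/
open SimpleGraph

variable {V : Type*}

/-!
Identify `K ⊆ V` with its indicator vector `x ∈ F₂^V`, so that "every vertex outside `D` has an
even number of neighbours in `K`" reads `(A x) u = 0` for `u ∉ D`. If such an `x ≠ 0` is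
supported in `D`, then `δ_loc(G) < |D|`. Either some vertex of `K` has all its neighbours in `D`,
and its degree is less than `|D|`; or, after at most one local complementation at a neighbour
outside `D`, some `t ∈ K` has `(A x) t = 1`, and complementing at `t` preserves the condition for
`K \ {t}`, which is smaller. Such an `x` exists by counting dimensions: for `|D| = ⌊n/2⌋ + 1`
the `2 (n - |D|) < n` linear conditions have a nontrivial common solution, and for
`|D| = rank A + 1 ≤ n` the kernel of `A` meets the vectors supported in `D` nontrivially
(if `rank A = n`, take `D = V`).
-/

open Matrix

@[simp]
lemma localComp_adj (G : SimpleGraph V) {t u w : V} :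
    (localComp G t).Adj u w ↔ u ≠ w ∧ ¬(G.Adj u w ↔ G.Adj t u ∧ G.Adj t w) :=
  Iff.rfl

section LocalComplementation

variable (G : SimpleGraph V) [DecidableRel G.Adj]

lemma adjMatrix_localComp [DecidableEq V] (t : V) [DecidableRel (localComp G t).Adj] :
    (localComp G t).adjMatrix (ZMod 2) =
      G.adjMatrix (ZMod 2) + vecMulVec (G.adjMatrix (ZMod 2) t) (G.adjMatrix (ZMod 2) t)
        + diagonal (G.adjMatrix (ZMod 2) t) := by
  ext u w
  rcases eq_or_ne u w with rfl | huw
  · by_cases h : G.Adj t u <;> simp [h, vecMulVec_apply, CharTwo.add_self_eq_zero]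
  · by_cases h : G.Adj u w <;> by_cases hu : G.Adj t u <;> by_cases hw : G.Adj t w <;>
      simp [vecMulVec_apply, huw, h, hu, hw, CharTwo.add_self_eq_zero]

lemma adjMatrix_localComp_mulVec_apply [Fintype V] (t : V) [DecidableRel (localComp G t).Adj]
    (x : V → ZMod 2) (u : V) :
    ((localComp G t).adjMatrix (ZMod 2) *ᵥ x) u =
      (G.adjMatrix (ZMod 2) *ᵥ x) u +
        G.adjMatrix (ZMod 2) t u * ((G.adjMatrix (ZMod 2) *ᵥ x) t + x u) := by
  classical
  rw [adjMatrix_localComp, add_mulVec, add_mulVec, vecMulVec_mulVec]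
  simp only [Pi.add_apply, Pi.smul_apply, mulVec_diagonal, MulOpposite.smul_eq_mul_unop,
    MulOpposite.unop_op]
  simp only [mulVec]
  ring

end LocalComplementation

lemma minDegree_le_ncard_neighborSet (G : SimpleGraph V) (v : V) :
    minDegree G ≤ (G.neighborSet v).ncard :=
  Nat.sInf_le ⟨v, rfl⟩

lemma minDegree_lt_card_of_neighborSet_subset {G : SimpleGraph V} {D : Finset V} {v : V}
    (hv : v ∈ D) (hvD : G.neighborSet v ⊆ D) : minDegree G < D.card := by
  have hsub : G.neighborSet v ⊆ (D : Set V) \ {v} := fun w hw =>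
    ⟨hvD hw, (G.ne_of_adj hw).symm⟩
  calc minDegree G ≤ (G.neighborSet v).ncard := minDegree_le_ncard_neighborSet G v
    _ ≤ ((D : Set V) \ {v}).ncard := Set.ncard_le_ncard hsub D.finite_toSet.sdiff
    _ < (D : Set V).ncard := Set.ncard_sdiff_singleton_lt_of_mem hv D.finite_toSet
    _ = D.card := Set.ncard_coe_finset D

lemma minDegreeLoc_le_minDegree (G : SimpleGraph V) : minDegreeLoc G ≤ minDegree G :=
  Nat.sInf_le ⟨[], rfl⟩

lemma minDegreeLoc_le_minDegreeLoc_localComp (G : SimpleGraph V) (v : V) :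
    minDegreeLoc G ≤ minDegreeLoc (localComp G v) := by
  obtain ⟨l, hl⟩ : sInf {n | ∃ l : List V, minDegree (l.foldl localComp (localComp G v)) = n} ∈
      {n | ∃ l : List V, minDegree (l.foldl localComp (localComp G v)) = n} :=
    Nat.sInf_mem ⟨_, [], rfl⟩
  exact Nat.sInf_le ⟨v :: l, hl⟩

section Pivot

variable [DecidableEq V]

lemma support_add_single_one_of_eq_one {x : V → ZMod 2} {v : V} (hv : x v = 1) :
    Function.support (x + Pi.single v 1) = Function.support x \ {v} := by
  ext u
  rcases eq_or_ne u v with rfl | huv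
  · simp [hv, CharTwo.add_self_eq_zero]
  · simp [huv]

variable [Fintype V] {G : SimpleGraph V} [DecidableRel G.Adj]

lemma adjMatrix_mulVec_add_single_one_apply (x : V → ZMod 2) (t u : V) :
    (G.adjMatrix (ZMod 2) *ᵥ (x + Pi.single t 1)) u =
      (G.adjMatrix (ZMod 2) *ᵥ x) u + G.adjMatrix (ZMod 2) u t := by
  rw [mulVec_add, mulVec_single_one]
  rfl

lemma adjMatrix_localComp_mulVec_add_single_one_apply_eq_zero {t u : V}
    [DecidableRel (localComp G t).Adj] {x : V → ZMod 2} (hAxt : (G.adjMatrix (ZMod 2) *ᵥ x) t = 1)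
    (hAxu : (G.adjMatrix (ZMod 2) *ᵥ x) u = 0) (hxu : x u = 0) (hut : u ≠ t) :
    ((localComp G t).adjMatrix (ZMod 2) *ᵥ (x + Pi.single t 1)) u = 0 := by
  rw [adjMatrix_localComp_mulVec_apply, adjMatrix_mulVec_add_single_one_apply,
    adjMatrix_mulVec_add_single_one_apply, hAxt, hAxu]
  simp [hxu, hut, G.adj_comm u t, CharTwo.add_self_eq_zero]

end Pivot

theorem minDegreeLoc_lt_card_of_support_subset [Fintype V] (G : SimpleGraph V)
    [DecidableRel G.Adj] (D : Finset V) (x : V → ZMod 2) (hx : x ≠ 0)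
    (hxD : Function.support x ⊆ D)
    (hAx : ∀ u ∉ D, (G.adjMatrix (ZMod 2) *ᵥ x) u = 0) :
    minDegreeLoc G < D.card := by
  classical
  by_cases hN : ∃ v ∈ Function.support x, G.neighborSet v ⊆ D
  · obtain ⟨v, hv, hvD⟩ := hN
    exact (minDegreeLoc_le_minDegree G).trans_lt
      (minDegree_lt_card_of_neighborSet_subset (hxD hv) hvD)
  push Not at hN
  obtain ⟨v, hv⟩ := Function.support_nonempty_iff.mpr hx
  obtain ⟨w, hvw, hwD⟩ := Set.not_subset.mp (hN v hv)
  have hxv : x v = 1 := Fin.eq_one_of_ne_zero _ hv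
  have hx_compl : ∀ u ∉ D, x u = 0 := fun u hu => Function.notMem_support.mp fun h => hu (hxD h)
  have pivot : ∀ (H : SimpleGraph V) [DecidableRel H.Adj],
      (∀ u ∉ D, (H.adjMatrix (ZMod 2) *ᵥ x) u = 0) → (H.adjMatrix (ZMod 2) *ᵥ x) v = 1 →
      minDegreeLoc H < D.card := by
    intro H _ hHx hHxv
    have hx' : x + Pi.single v 1 ≠ 0 := fun h => by
      have := adjMatrix_mulVec_add_single_one_apply (G := H) x v v
      simp [h, hHxv] at this
    exact (minDegreeLoc_le_minDegreeLoc_localComp H v).trans_lt <|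
      minDegreeLoc_lt_card_of_support_subset (localComp H v) D (x + Pi.single v 1) hx'
        ((support_add_single_one_of_eq_one hxv).trans_subset (Set.sdiff_subset.trans hxD))
        fun u hu => adjMatrix_localComp_mulVec_add_single_one_apply_eq_zero hHxv (hHx u hu)
          (hx_compl u hu) (ne_of_mem_of_not_mem (hxD hv) hu).symm
  rcases eq_or_ne ((G.adjMatrix (ZMod 2) *ᵥ x) v) 0 with hAxv | hAxv
  · -- Complementing at `w ∉ D` adds `x u` to `(A x) u` for every neighbour `u` of `w`.
    have hAxw := hAx w hwD
    refine (minDegreeLoc_le_minDegreeLoc_localComp G w).trans_lt (pivot _ (fun u hu => ?_) ?_)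
    · rw [adjMatrix_localComp_mulVec_apply, hAx u hu, hAxw, hx_compl u hu]
      ring
    · rw [adjMatrix_localComp_mulVec_apply, hAxv, hAxw, hxv, adjMatrix_apply, if_pos hvw.symm]
      ring
  · exact pivot G hAx (Fin.eq_one_of_ne_zero _ hAxv)
termination_by (Function.support x).ncard
decreasing_by
  classical
  rw [support_add_single_one_of_eq_one hxv]
  exact Set.ncard_sdiff_singleton_lt_of_mem hv (Set.toFinite _)

section KernelVectors

variable [Fintype V] {K W : Type*} [Field K] [AddCommGroup W] [Module K W] [FiniteDimensional K W]

lemma exists_ne_zero_support_subset_map_eq_zero (D : Finset V) (f : (V → K) →ₗ[K] W)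
    (h : Module.finrank K W + (Fintype.card V - D.card) < Fintype.card V) :
    ∃ x : V → K, x ≠ 0 ∧ Function.support x ⊆ D ∧ f x = 0 := by
  classical
  let g := (LinearMap.funLeft K K (Subtype.val : {v // v ∉ D} → V)).prod f
  have hcard : Fintype.card {v // v ∉ D} = Fintype.card V - D.card := by
    simp [Fintype.card_subtype_compl]
  obtain ⟨x, hxg, hx⟩ := Submodule.exists_mem_ne_zero_of_ne_bot <|
    LinearMap.ker_ne_bot_of_finrank_lt (f := g) (by simpa [hcard, add_comm] using h)
  simp only [LinearMap.mem_ker, g, LinearMap.prod_apply, Function.prod, Prod.mk_eq_zero] at hxg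
  refine ⟨x, hx, fun v hv => ?_, hxg.2⟩
  by_contra hvD
  exact hv (congrFun hxg.1 ⟨v, hvD⟩)

end KernelVectors

section Bounds

variable [Fintype V] (G : SimpleGraph V)

lemma minDegreeLoc_le_card_div_two [Nonempty V] : minDegreeLoc G ≤ Fintype.card V / 2 := by
  classical
  have hn : 0 < Fintype.card V := Fintype.card_pos
  obtain ⟨D, -, hD⟩ := Finset.exists_subset_card_eq (s := (Finset.univ : Finset V))
    (n := Fintype.card V / 2 + 1) (by rw [Finset.card_univ]; omega)
  obtain ⟨x, hx, hxD, hAx⟩ := exists_ne_zero_support_subset_map_eq_zero D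
    ((LinearMap.funLeft (ZMod 2) (ZMod 2) (Subtype.val : {v // v ∉ D} → V)).comp
      (G.adjMatrix (ZMod 2)).mulVecLin)
    (by
      rw [Module.finrank_fintype_fun_eq_card, Fintype.card_subtype_compl, Fintype.card_coe, hD]
      omega)
  have := minDegreeLoc_lt_card_of_support_subset G D x hx hxD fun u hu => congrFun hAx ⟨u, hu⟩
  omega

lemma minDegreeLoc_le_rank [Nonempty V] [DecidableRel G.Adj] :
    minDegreeLoc G ≤ (G.adjMatrix (ZMod 2)).rank := by
  rcases lt_or_ge (G.adjMatrix (ZMod 2)).rank (Fintype.card V) with h | h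
  · obtain ⟨D, -, hD⟩ := Finset.exists_subset_card_eq (s := (Finset.univ : Finset V))
      (n := (G.adjMatrix (ZMod 2)).rank + 1) (by rw [Finset.card_univ]; omega)
    obtain ⟨x, hx, hxD, hAx⟩ := exists_ne_zero_support_subset_map_eq_zero D
      (G.adjMatrix (ZMod 2)).mulVecLin.rangeRestrict
      (by rw [← Matrix.rank]; omega)
    rw [← LinearMap.mem_ker, LinearMap.ker_rangeRestrict, LinearMap.mem_ker] at hAx
    have := minDegreeLoc_lt_card_of_support_subset G D x hx hxD fun u _ => congrFun hAx u
    omega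
  · have :=
      minDegreeLoc_lt_card_of_support_subset G Finset.univ 1 one_ne_zero (by simp) (by simp)
    rw [Finset.card_univ] at this
    omega

end Bounds

theorem statement_10_general [Fintype V] [Nonempty V] (G : SimpleGraph V)
    [DecidableRel G.Adj] :
    minDegreeLoc G ≤ min (Fintype.card V / 2)
      (Matrix.rank (Matrix.of fun u w : V => if G.Adj u w then (1 : ZMod 2) else 0)) :=
  le_min (minDegreeLoc_le_card_div_two G) (minDegreeLoc_le_rank G)

/-- `δ_loc(G) ≤ min(⌊|V|/2⌋, rank(A))` where `A` is the
adjacency matrix of `G` over the field `F₂`. -/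
theorem statement_10 [Fintype V] [DecidableEq V] [Nonempty V] (G : SimpleGraph V)
    [DecidableRel G.Adj] :
    minDegreeLoc G ≤ min (Fintype.card V / 2)
      (Matrix.rank (Matrix.of fun u w : V => if G.Adj u w then (1 : ZMod 2) else 0)) :=
  statement_10_general G
end
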